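/- arXiv:math/0411089 — 2 statements merged into one kernel-verified Lean document; each statement's English description precedes it below -/
import Mathlib

section
/- Let q ≥ 2, let F_q be a finite field with q elements, and let ν_i be the number of monic irreducible polynomials of degree i over F_q. Then ν_i is asymptotic to q^i/i as i → ∞; that is, the sequence i ↦ ν_i · i / q^i tends to 1. -/
open Polynomial Filter Topology

open scoped Classical in
/-- The excess of a polynomial over a field: total multiplicity of its irreducible
factorization minus the number of distinct irreducible factors. -/
noncomputable def excess {Fq : Type*} [Field Fq] (f : Polynomial Fq) : ℕ :=
  (UniqueFactorizationMonoid.normalizedFactors f).card -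
    (UniqueFactorizationMonoid.normalizedFactors f).toFinset.card

/-- `excessCount Fq n k` is the number of monic polynomials of degree `n` over `Fq`
with excess `k` (the quantity `e_{n,k}`). -/
noncomputable def excessCount (Fq : Type*) [Field Fq] (n k : ℕ) : ℕ :=
  {f : Polynomial Fq | f.Monic ∧ f.natDegree = n ∧ excess f = k}.ncard

/-- `nu Fq i` is the number of monic irreducible polynomials of degree `i` over `Fq`. -/
noncomputable def nu (Fq : Type*) [Field Fq] (i : ℕ) : ℕ :=
  {p : Polynomial Fq | p.Monic ∧ Irreducible p ∧ p.natDegree = i}.ncard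

/-- `sqfCount Fq n` is the number of squarefree monic polynomials of degree `n` over `Fq`
(the quantity `e_{n,0}`). -/
noncomputable def sqfCount (Fq : Type*) [Field Fq] (n : ℕ) : ℕ :=
  {f : Polynomial Fq | f.Monic ∧ f.natDegree = n ∧ Squarefree f}.ncard

/-! Let `L` be the extension of `F_q` of degree `n`. The minimal polynomial of an element of `L`
is monic irreducible of degree `d ∣ n`, and conversely a monic irreducible `f` of degree `d ∣ n`
divides `X ^ q ^ n - X`, which splits in `L`; being separable, `f` then has exactly `d` roots in
`L`. Sorting the elements of `L` by minimal polynomial gives `q ^ n = ∑_{d ∣ n} d ν_d`. Hence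
`n ν_n ≤ q ^ n`, and since a proper divisor of `n` is at most `n / 2`, the remaining terms sum to
less than `q ^ (n / 2 + 1) = o(q ^ n)`. -/

theorem Polynomial.finite_setOf_natDegree_le {R : Type*} [CommRing R] [Finite R] (d : ℕ) :
    {p : R[X] | p.natDegree ≤ d}.Finite := by
  have : Finite (degreeLT R (d + 1)) := .of_equiv _ (degreeLTEquiv R (d + 1)).toEquiv.symm
  refine (Set.finite_range ((↑) : degreeLT R (d + 1) → R[X])).subset fun p hp => ?_
  refine ⟨⟨p, mem_degreeLT.mpr ?_⟩, rfl⟩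
  exact (degree_le_natDegree.trans (WithBot.coe_le_coe.mpr hp)).trans_lt
    (WithBot.coe_lt_coe.mpr d.lt_succ_self)

theorem Irreducible.splits_of_natDegree_dvd_finrank {K L : Type*} [Field K] [Field L]
    [Algebra K L] [Finite L] {f : K[X]} (hi : Irreducible f)
    (hd : f.natDegree ∣ Module.finrank K L) : (f.map (algebraMap K L)).Splits := by
  have : Module.Finite K L := .of_finite
  have : Finite K := .of_injective _ (algebraMap K L).injective
  have hdvd : f ∣ X ^ Nat.card L - X := by
    rw [Module.natCard_eq_pow_finrank (K := K)]
    exact hi.natDegree_dvd_iff_dvd_X_pow_card_pow_sub_X.mp hd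
  refine Splits.of_dvd ?_ ?_ (map_dvd (algebraMap K L) hdvd)
  · simpa using splits_X_pow_nat_card_sub_X (K := L)
  · exact map_ne_zero (FiniteField.X_pow_card_sub_X_ne_zero K Finite.one_lt_card)

open scoped Classical in
theorem card_filter_minpoly_eq {K L : Type*} [Field K] [PerfectField K] [Field L] [Algebra K L]
    [Fintype L] {f : K[X]} (hm : f.Monic) (hi : Irreducible f)
    (hs : (f.map (algebraMap K L)).Splits) :
    (Finset.univ.filter fun x : L => minpoly K x = f).card = f.natDegree := by
  rw [← card_rootSet_eq_natDegree (PerfectField.separable_of_irreducible hi) hs,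
    ← Fintype.card_subtype]
  refine Fintype.card_congr (Equiv.subtypeEquivRight fun x => ?_)
  rw [mem_rootSet_of_ne hm.ne_zero]
  exact ⟨fun h => h ▸ minpoly.aeval K x, fun h => (minpoly.eq_of_irreducible_of_monic hi h hm).symm⟩

open scoped Classical in
theorem card_filter_natDegree_minpoly_eq {K L : Type*} [Field K] [Finite K] [Field L]
    [Algebra K L] [Fintype L] {d : ℕ} (hd : d ∣ Module.finrank K L) :
    (Finset.univ.filter fun x : L => (minpoly K x).natDegree = d).card = d * nu K d := by
  have hS : {p : K[X] | p.Monic ∧ Irreducible p ∧ p.natDegree = d}.Finite :=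
    (finite_setOf_natDegree_le d).subset fun p hp => hp.2.2.le
  rw [nu, Set.ncard_eq_toFinset_card _ hS, Finset.card_eq_sum_card_fiberwise (f := minpoly K)
    (t := hS.toFinset) fun x hx => ?_]
  · rw [mul_comm, ← smul_eq_mul, ← Finset.sum_const]
    refine Finset.sum_congr rfl fun f hf => ?_
    obtain ⟨hm, hi, rfl⟩ : f.Monic ∧ Irreducible f ∧ f.natDegree = d := by simpa using hf
    rw [Finset.filter_filter,
      Finset.filter_congr fun x _ => and_iff_right_of_imp (congrArg natDegree),
      card_filter_minpoly_eq hm hi (hi.splits_of_natDegree_dvd_finrank hd)]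
  · obtain ⟨-, rfl⟩ := Finset.mem_filter.mp hx
    have hx : IsIntegral K x := .of_finite K x
    simpa using ⟨minpoly.monic hx, minpoly.irreducible hx⟩

theorem natCard_eq_sum_divisors_mul_nu (K L : Type*) [Field K] [Finite K] [Field L]
    [Algebra K L] [Finite L] :
    Nat.card L = ∑ d ∈ (Module.finrank K L).divisors, d * nu K d := by
  classical
  have : Fintype L := .ofFinite L
  have hn : Module.finrank K L ≠ 0 := (Module.finrank_pos (R := K) (M := L)).ne'
  rw [Nat.card_eq_fintype_card, ← Finset.card_univ, Finset.card_eq_sum_card_fiberwise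
    (f := fun x : L => (minpoly K x).natDegree) (t := (Module.finrank K L).divisors)
    fun x _ => Nat.mem_divisors.mpr ⟨minpoly.degree_dvd (.of_finite K x), hn⟩]
  exact Finset.sum_congr rfl fun d hd =>
    card_filter_natDegree_minpoly_eq (Nat.mem_divisors.mp hd).1

theorem pow_eq_sum_divisors_mul_nu (K : Type*) [Field K] [Finite K] {n : ℕ} (hn : n ≠ 0) :
    Nat.card K ^ n = ∑ d ∈ n.divisors, d * nu K d := by
  obtain ⟨p, hp⟩ := CharP.exists K
  have : Fact p.Prime := ⟨CharP.char_is_prime K p⟩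
  have : NeZero n := ⟨hn⟩
  rw [← FiniteField.natCard_extension K p n, natCard_eq_sum_divisors_mul_nu K,
    FiniteField.finrank_extension]

theorem mul_nu_le_pow (K : Type*) [Field K] [Finite K] {d : ℕ} (hd : d ≠ 0) :
    d * nu K d ≤ Nat.card K ^ d := by
  rw [pow_eq_sum_divisors_mul_nu K hd]
  exact Finset.single_le_sum (f := fun e => e * nu K e) (fun e _ => Nat.zero_le _)
    (Nat.mem_divisors_self d hd)

theorem Nat.le_div_two_of_mem_properDivisors {d n : ℕ} (hd : d ∈ n.properDivisors) :
    d ≤ n / 2 := by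
  rw [Nat.le_div_iff_mul_le two_pos]
  calc d * 2 ≤ d * (n / d) := Nat.mul_le_mul_left d (Nat.one_lt_div_of_mem_properDivisors hd)
    _ ≤ n := Nat.mul_div_le n d

theorem pow_lt_mul_nu_add_pow (K : Type*) [Field K] [Finite K] {n : ℕ} (hn : n ≠ 0) :
    Nat.card K ^ n < n * nu K n + Nat.card K ^ (n / 2 + 1) := by
  rw [pow_eq_sum_divisors_mul_nu K hn, ← Nat.cons_self_properDivisors hn, Finset.sum_cons,
    add_lt_add_iff_left]
  calc ∑ d ∈ n.properDivisors, d * nu K d ≤ ∑ d ∈ n.properDivisors, Nat.card K ^ d :=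
        Finset.sum_le_sum fun d hd => mul_nu_le_pow K (Nat.pos_of_mem_properDivisors hd).ne'
    _ < Nat.card K ^ (n / 2 + 1) := Nat.geomSum_lt Finite.one_lt_card fun d hd =>
        Nat.lt_succ_of_le (Nat.le_div_two_of_mem_properDivisors hd)

theorem tendsto_pow_div_two_succ_div_pow {r : ℝ} (hr : 1 < r) :
    Tendsto (fun n : ℕ => r ^ (n / 2 + 1) / r ^ n) atTop (𝓝 0) := by
  have hexp : Tendsto (fun n : ℕ => n - (n / 2 + 1)) atTop atTop :=
    tendsto_atTop_atTop.mpr fun b => ⟨2 * b + 2, fun n hn => by omega⟩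
  refine (tendsto_inv_atTop_zero.comp ((tendsto_pow_atTop_atTop_of_one_lt hr).comp hexp)).congr' ?_
  filter_upwards [eventually_ge_atTop 2] with n hn
  rw [Function.comp_apply, Function.comp_apply, pow_sub₀ r (by positivity) (by omega),
    ← div_eq_mul_inv, inv_div]

theorem prime_polynomial_asymptotics_general (q : ℕ) (Fq : Type*) [Field Fq]
    [Fintype Fq] (hcard : Fintype.card Fq = q) :
    Tendsto (fun i : ℕ => (nu Fq i : ℝ) * (i : ℝ) / (q : ℝ) ^ i) atTop (𝓝 1) := by
  have hq : Nat.card Fq = q := Nat.card_eq_fintype_card.trans hcard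
  have hr : (1 : ℝ) < q := by exact_mod_cast hq ▸ Finite.one_lt_card
  refine tendsto_of_tendsto_of_tendsto_of_le_of_le' (by
    simpa using tendsto_const_nhds.sub (tendsto_pow_div_two_succ_div_pow hr)) tendsto_const_nhds
    ?_ ?_ <;> filter_upwards [eventually_ne_atTop 0] with n hn
  · have hlower := pow_lt_mul_nu_add_pow Fq hn
    rw [hq] at hlower
    rw [sub_le_iff_le_add, ← add_div, one_le_div (by positivity)]
    exact_mod_cast (mul_comm n (nu Fq n) ▸ hlower).le
  · have hupper := mul_nu_le_pow Fq hn
    rw [hq] at hupper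
    exact div_le_one_of_le₀ (by exact_mod_cast mul_comm n (nu Fq n) ▸ hupper) (by positivity)

/-- the prime polynomial theorem: `ν_i ~ q^i / i`, i.e.
`ν_i · i / q^i → 1` as `i → ∞`. -/
theorem prime_polynomial_asymptotics (q : ℕ) (hq : 2 ≤ q) (Fq : Type*) [Field Fq]
    [Fintype Fq] (hcard : Fintype.card Fq = q) :
    Tendsto (fun i : ℕ => (nu Fq i : ℝ) * (i : ℝ) / (q : ℝ) ^ i) atTop (𝓝 1) :=
  prime_polynomial_asymptotics_general q Fq hcard
end

section
/- Let q ≥ 2, let F_q be a finite field with q elements, and for each k let d_k = lim_{n→∞} e_{n,k}/q^n, where e_{n,k} is the number of monic polynomials of degree n over F_q with excess k. Then ∑_{k≥0} d_k = 1. -/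
open Polynomial Filter Topology

/-!
Every monic `f` of excess `k` factors as `f = v² h` with `v, h` monic and `deg v ≥ ⌈k/2⌉`
(take `v = ∏ π ^ ⌊α/2⌋`). Counting the pairs `(v, h)` gives
`e_{n,k} ≤ ∑_{m ≥ ⌈k/2⌉} q^(n-m) ≤ 2 q^n q^(-⌈k/2⌉)`, so `e_{n,k} / q^n` is dominated, uniformly
in `n`, by the summable sequence `2 q^(-k/2)`. As `∑_k e_{n,k} = q^n` for every `n`, Tannery's
theorem lets the limit `n → ∞` pass through the sum over `k`.
-/

open Finset UniqueFactorizationMonoid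

section MonicOfDegree

variable (R : Type*) [Semiring R] [Nontrivial R] [Finite R]

theorem Polynomial.finite_setOf_monic_natDegree_eq (n : ℕ) :
    {p : R[X] | p.Monic ∧ p.natDegree = n}.Finite :=
  have : Finite (degreeLT R n) := .of_equiv _ (degreeLTEquiv R n).toEquiv.symm
  Set.finite_coe_iff.mp (.of_equiv _ (monicEquivDegreeLT n).symm)

noncomputable def Polynomial.monicOfDegree (n : ℕ) : Finset R[X] :=
  (finite_setOf_monic_natDegree_eq R n).toFinset

variable {R}

@[simp]
theorem Polynomial.mem_monicOfDegree {n : ℕ} {p : R[X]} :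
    p ∈ monicOfDegree R n ↔ p.Monic ∧ p.natDegree = n :=
  Set.Finite.mem_toFinset _

theorem Polynomial.card_monicOfDegree (n : ℕ) : #(monicOfDegree R n) = Nat.card R ^ n := by
  rw [monicOfDegree, ← Nat.card_eq_card_finite_toFinset, Set.coe_ofPred,
    Nat.card_congr ((monicEquivDegreeLT n).trans (degreeLTEquiv R n).toEquiv), Nat.card_fun,
    Nat.card_fin]

end MonicOfDegree

section Excess

open scoped Classical

variable {K : Type*} [Field K] {f : K[X]}

theorem Polynomial.Monic.prod_normalizedFactors (hf : f.Monic) :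
    (normalizedFactors f).prod = f := by
  rw [prod_normalizedFactors_eq hf.ne_zero, hf.normalize_eq_self]

theorem Polynomial.Monic.natDegree_eq_sum_normalizedFactors (hf : f.Monic) :
    f.natDegree = ((normalizedFactors f).map natDegree).sum := by
  conv_lhs => rw [← hf.prod_normalizedFactors]
  exact natDegree_multiset_prod_of_monic _ fun p hp =>
    ((Polynomial.mem_normalizedFactors_iff hf.ne_zero).1 hp).2.1

theorem Polynomial.Monic.card_normalizedFactors_le_natDegree (hf : f.Monic) :
    Multiset.card (normalizedFactors f) ≤ f.natDegree := by
  rw [hf.natDegree_eq_sum_normalizedFactors]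
  simpa using Multiset.card_nsmul_le_sum (s := (normalizedFactors f).map natDegree) (a := 1)
    (by simpa using fun p hp => (irreducible_of_normalized_factor p hp).natDegree_pos.nat_succ_le)

theorem Polynomial.Monic.excess_le_natDegree (hf : f.Monic) : excess f ≤ f.natDegree :=
  (Nat.sub_le _ _).trans hf.card_normalizedFactors_le_natDegree

theorem excess_le_two_mul_sum_count_div_two (f : K[X]) :
    excess f ≤ 2 * ∑ p ∈ (normalizedFactors f).toFinset, (normalizedFactors f).count p / 2 := by
  unfold excess
  set M := normalizedFactors f
  have hcount := Finset.sum_le_sum fun p (_ : p ∈ M.toFinset) =>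
    show M.count p ≤ 2 * (M.count p / 2) + 1 by omega
  rw [Finset.sum_add_distrib, ← Finset.mul_sum, Multiset.toFinset_sum_count_eq,
    Finset.sum_const, smul_eq_mul, mul_one] at hcount
  omega

theorem Polynomial.Monic.exists_monic_sq_mul_excess_le (hf : f.Monic) :
    ∃ v h : K[X], v.Monic ∧ h.Monic ∧ f = v ^ 2 * h ∧ excess f ≤ 2 * v.natDegree := by
  set M := normalizedFactors f
  have hM : ∀ p ∈ M.toFinset, p.Monic ∧ 0 < p.natDegree := fun p hp => by
    obtain ⟨hirr, hmonic, -⟩ :=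
      (Polynomial.mem_normalizedFactors_iff hf.ne_zero).1 (Multiset.mem_toFinset.1 hp)
    exact ⟨hmonic, hirr.natDegree_pos⟩
  set v := ∏ p ∈ M.toFinset, p ^ (M.count p / 2)
  have hv : v.Monic := monic_prod_of_monic _ _ fun p hp => (hM p hp).1.pow _
  obtain ⟨h, hfh⟩ : v ^ 2 ∣ f := by
    conv_rhs => rw [← hf.prod_normalizedFactors, Finset.prod_multiset_count]
    rw [← Finset.prod_pow]
    exact Finset.prod_dvd_prod_of_dvd _ _ fun p _ => by
      rw [← pow_mul]
      exact pow_dvd_pow p (Nat.div_mul_le_self _ 2)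
  refine ⟨v, h, hv, (hv.pow 2).of_mul_monic_left (hfh ▸ hf), hfh, ?_⟩
  calc excess f ≤ 2 * ∑ p ∈ M.toFinset, M.count p / 2 := excess_le_two_mul_sum_count_div_two f
    _ ≤ 2 * ∑ p ∈ M.toFinset, M.count p / 2 * p.natDegree := by
      gcongr with p hp
      exact Nat.le_mul_of_pos_right _ (hM p hp).2
    _ = 2 * v.natDegree := by
      rw [natDegree_prod_of_monic _ _ fun p hp => (hM p hp).1.pow _]
      simp only [Polynomial.natDegree_pow]

end Excess

section GeometricBounds

variable {q : ℝ}

theorem sum_Icc_inv_pow_le (hq : 2 ≤ q) (a b : ℕ) : ∑ m ∈ Icc a b, q⁻¹ ^ m ≤ 2 * q⁻¹ ^ a := by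
  have hq_inv : q⁻¹ ≤ 2⁻¹ := inv_anti₀ (by norm_num) hq
  have hq_inv_lt : q⁻¹ < 1 := hq_inv.trans_lt (by norm_num)
  calc ∑ m ∈ Icc a b, q⁻¹ ^ m = ∑ m ∈ Ico a (b + 1), q⁻¹ ^ m := by rw [Ico_add_one_right_eq_Icc]
    _ ≤ q⁻¹ ^ a / (1 - q⁻¹) := geom_sum_Ico_le_of_lt_one (by positivity) hq_inv_lt
    _ ≤ 2 * q⁻¹ ^ a := by
        rw [div_le_iff₀ (sub_pos.2 hq_inv_lt)]
        nlinarith [pow_nonneg (inv_nonneg.2 (by positivity : (0 : ℝ) ≤ q)) a]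

theorem inv_pow_div_two_le_inv_sqrt_pow (hq : 1 ≤ q) (k : ℕ) :
    q⁻¹ ^ ((k + 1) / 2) ≤ (√q)⁻¹ ^ k := by
  have hsqrt : (√q)⁻¹ ^ 2 = q⁻¹ := by rw [inv_pow, Real.sq_sqrt (by positivity)]
  rw [← hsqrt, ← pow_mul]
  exact pow_le_pow_of_le_one (by positivity)
    (inv_le_one_of_one_le₀ (Real.one_le_sqrt.2 hq)) (by omega)

end GeometricBounds

section Counting

variable {K : Type*} [Field K] [Finite K]

theorem excessCount_eq_card_filter (n k : ℕ) :
    excessCount K n k = #{f ∈ monicOfDegree K n | excess f = k} := by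
  rw [excessCount, ← Set.ncard_coe_finset]
  congr 1
  ext f
  simp [and_assoc]

theorem excessCount_eq_zero_of_lt {n k : ℕ} (h : n < k) : excessCount K n k = 0 := by
  rw [excessCount_eq_card_filter, card_eq_zero, filter_eq_empty_iff]
  intro f hf
  have hf := mem_monicOfDegree.1 hf
  have := hf.1.excess_le_natDegree
  omega

theorem sum_excessCount (n : ℕ) :
    ∑ k ∈ range (n + 1), excessCount K n k = Nat.card K ^ n := by
  simp_rw [excessCount_eq_card_filter]
  rw [← card_monicOfDegree, card_eq_sum_card_fiberwise (f := excess)]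
  intro f hf
  have hf := mem_monicOfDegree.1 hf
  have := hf.1.excess_le_natDegree
  rw [coe_range, Set.mem_Iio]
  omega

theorem excessCount_le_sum (n k : ℕ) :
    excessCount K n k ≤ ∑ m ∈ Icc ((k + 1) / 2) (n / 2), Nat.card K ^ (n - m) := by
  classical
  rw [excessCount_eq_card_filter]
  calc #{f ∈ monicOfDegree K n | excess f = k}
      ≤ #((Icc ((k + 1) / 2) (n / 2)).biUnion fun m =>
          image₂ (fun v h => v ^ 2 * h) (monicOfDegree K m) (monicOfDegree K (n - 2 * m))) := by
        refine card_le_card fun f hf => ?_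
        obtain ⟨⟨hfm, hfn⟩, hfk⟩ := by simpa using hf
        obtain ⟨v, h, hv, hh, rfl, hexcess⟩ := hfm.exists_monic_sq_mul_excess_le
        have hdeg : (v ^ 2 * h).natDegree = 2 * v.natDegree + h.natDegree := by
          rw [(hv.pow 2).natDegree_mul hh, Polynomial.natDegree_pow]
        simp only [mem_biUnion, mem_Icc, mem_image₂, mem_monicOfDegree]
        exact ⟨v.natDegree, ⟨by omega, by omega⟩, v, ⟨hv, rfl⟩, h, ⟨hh, by omega⟩, rfl⟩
    _ ≤ ∑ m ∈ Icc ((k + 1) / 2) (n / 2), #(monicOfDegree K m) * #(monicOfDegree K (n - 2 * m)) :=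
        card_biUnion_le.trans (sum_le_sum fun m _ => card_image₂_le _ _ _)
    _ = ∑ m ∈ Icc ((k + 1) / 2) (n / 2), Nat.card K ^ (n - m) := by
        refine sum_congr rfl fun m hm => ?_
        rw [card_monicOfDegree, card_monicOfDegree, ← pow_add]
        congr 1
        rw [mem_Icc] at hm
        omega

theorem excessCount_div_pow_le (n k : ℕ) :
    (excessCount K n k : ℝ) / Nat.card K ^ n ≤ 2 * (√(Nat.card K))⁻¹ ^ k := by
  have hq : (2 : ℝ) ≤ Nat.card K := by exact_mod_cast Finite.one_lt_card (α := K)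
  have hcount : (excessCount K n k : ℝ) ≤
      ∑ m ∈ Icc ((k + 1) / 2) (n / 2), (Nat.card K : ℝ) ^ (n - m) := by
    exact_mod_cast excessCount_le_sum n k
  set q : ℝ := (Nat.card K : ℝ)
  calc (excessCount K n k : ℝ) / q ^ n
      ≤ ∑ m ∈ Icc ((k + 1) / 2) (n / 2), q ^ (n - m) / q ^ n := by
        rw [← sum_div]
        gcongr
    _ = ∑ m ∈ Icc ((k + 1) / 2) (n / 2), q⁻¹ ^ m := by
        refine sum_congr rfl fun m hm => ?_
        rw [mem_Icc] at hm
        rw [pow_sub₀ q (by positivity) (by omega), inv_pow]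
        field_simp
    _ ≤ 2 * q⁻¹ ^ ((k + 1) / 2) := sum_Icc_inv_pow_le hq _ _
    _ ≤ 2 * (√q)⁻¹ ^ k := by
        gcongr
        exact inv_pow_div_two_le_inv_sqrt_pow (by linarith) k

theorem tsum_excessCount_div_pow (n : ℕ) :
    ∑' k, (excessCount K n k : ℝ) / Nat.card K ^ n = 1 := by
  rw [tsum_eq_sum (s := range (n + 1)) fun k hk => by
    rw [excessCount_eq_zero_of_lt (by simpa using hk), Nat.cast_zero, zero_div]]
  rw [← sum_div, ← Nat.cast_sum, sum_excessCount, Nat.cast_pow,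
    div_self (pow_ne_zero _ (Nat.cast_ne_zero.2 Nat.card_pos.ne'))]

end Counting

theorem densities_sum_to_one_general (q : ℕ) (Fq : Type*) [Field Fq] [Fintype Fq]
    (hcard : Fintype.card Fq = q) (d : ℕ → ℝ)
    (hd : ∀ k, Tendsto (fun n : ℕ => (excessCount Fq n k : ℝ) / (q : ℝ) ^ n) atTop (𝓝 (d k))) :
    HasSum d 1 := by
  rw [← hcard, ← Nat.card_eq_fintype_card] at hd
  set bound : ℕ → ℝ := fun k => 2 * (√(Nat.card Fq))⁻¹ ^ k
  have hbound : Summable bound := by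
    refine (summable_geometric_of_lt_one (by positivity) ?_).mul_left 2
    exact inv_lt_one_of_one_lt₀ (Real.lt_sqrt_of_sq_lt (by exact_mod_cast Finite.one_lt_card))
  have hd_summable : Summable d :=
    .of_nonneg_of_le (fun k => ge_of_tendsto' (hd k) fun n => by positivity)
      (fun k => le_of_tendsto' (hd k) fun n => excessCount_div_pow_le n k) hbound
  have hlim := tendsto_tsum_of_dominated_convergence hbound hd <| .of_forall fun n k => by
    rw [Real.norm_of_nonneg (by positivity)]
    exact excessCount_div_pow_le n k
  simp_rw [tsum_excessCount_div_pow] at hlim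
  exact tendsto_nhds_unique hlim tendsto_const_nhds ▸ hd_summable.hasSum

/-- the densities `d_k` sum to `1`. -/
theorem densities_sum_to_one (q : ℕ) (hq : 2 ≤ q) (Fq : Type*) [Field Fq] [Fintype Fq]
    (hcard : Fintype.card Fq = q) (d : ℕ → ℝ)
    (hd : ∀ k, Tendsto (fun n : ℕ => (excessCount Fq n k : ℝ) / (q : ℝ) ^ n) atTop (𝓝 (d k))) :
    HasSum d 1 :=
  densities_sum_to_one_general q Fq hcard d hd
end
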